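/- Let b : X → ℝ, let χ₀ be differentiable at every point of s with (Lχ₀)(x) + q(x)·χ₀(x) = b(x) for all x ∈ s, let η be differentiable at every point of s with (Lη)(x) + q(x)·η(x) = 0 for all x ∈ s, let φ₁, …, φₘ be differentiable at every point of s with (Lφᵢ)(x) = 0 for all x ∈ s and all i, and let f : ℝᵐ → ℝ be differentiable. Then the function χ(x) = χ₀(x) + η(x)·f(φ₁(x), …, φₘ(x)) satisfies (Lχ)(x) + q(x)·χ(x) = b(x) for all x ∈ s. -/

import Mathlib

/-! By the chain rule, `f(φ₁, …, φₘ)` is annihilated by `L` along with the `φᵢ`, so the Leibniz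
rule gives `L(η · f(φ)) = (Lη) · f(φ)`. Hence `(L + q)χ = (L + q)χ₀ + ((L + q)η) · f(φ) = b + 0`. -/

section DirectionalDerivative

variable {𝕜 : Type*} [NontriviallyNormedField 𝕜] {E : Type*} [NormedAddCommGroup E]
  [NormedSpace 𝕜 E] {x v : E}

theorem fderiv_pi_apply_eq_zero {ι G : Type*} [Fintype ι] [NormedAddCommGroup G]
    [NormedSpace 𝕜 G] {φ : ι → E → G} (hφd : ∀ i, DifferentiableAt 𝕜 (φ i) x)
    (hφv : ∀ i, fderiv 𝕜 (φ i) x v = 0) :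
    fderiv 𝕜 (fun y i => φ i y) x v = 0 := by
  funext i
  simp [fderiv_pi hφd, hφv i]

theorem fderiv_comp_pi_apply_eq_zero {ι G F : Type*} [Fintype ι] [NormedAddCommGroup G]
    [NormedSpace 𝕜 G] [NormedAddCommGroup F] [NormedSpace 𝕜 F]
    {φ : ι → E → G} {f : (ι → G) → F} (hf : DifferentiableAt 𝕜 f (fun i => φ i x))
    (hφd : ∀ i, DifferentiableAt 𝕜 (φ i) x) (hφv : ∀ i, fderiv 𝕜 (φ i) x v = 0) :
    fderiv 𝕜 (fun y => f (fun i => φ i y)) x v = 0 := by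
  have hΦd : DifferentiableAt 𝕜 (fun y i => φ i y) x := differentiableAt_pi.2 hφd
  rw [fderiv_fun_comp x hf hΦd, ContinuousLinearMap.comp_apply,
    fderiv_pi_apply_eq_zero hφd hφv, map_zero]

theorem fderiv_add_mul_apply_of_fderiv_apply_eq_zero {χ₀ η g : E → 𝕜}
    (hχ₀ : DifferentiableAt 𝕜 χ₀ x) (hη : DifferentiableAt 𝕜 η x)
    (hg : DifferentiableAt 𝕜 g x) (hgv : fderiv 𝕜 g x v = 0) :
    fderiv 𝕜 (fun y => χ₀ y + η y * g y) x v = fderiv 𝕜 χ₀ x v + fderiv 𝕜 η x v * g x := by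
  rw [fderiv_fun_add hχ₀ (hη.fun_mul hg), fderiv_fun_mul hη hg]
  simp [hgv, mul_comm]

end DirectionalDerivative

theorem general_solution_totally_linear_general
    {X : Type*} [NormedAddCommGroup X] [NormedSpace ℝ X]
    (s : Set X) (a : X → X) (q b : X → ℝ) (χ₀ η : X → ℝ)
    (hχ₀d : ∀ x ∈ s, DifferentiableAt ℝ χ₀ x)
    (hχ₀eq : ∀ x ∈ s, fderiv ℝ χ₀ x (a x) + q x * χ₀ x = b x)
    (hηd : ∀ x ∈ s, DifferentiableAt ℝ η x)
    (hηeq : ∀ x ∈ s, fderiv ℝ η x (a x) + q x * η x = 0)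
    (m : ℕ) (φ : Fin m → X → ℝ)
    (hφd : ∀ i, ∀ x ∈ s, DifferentiableAt ℝ (φ i) x)
    (hφeq : ∀ i, ∀ x ∈ s, fderiv ℝ (φ i) x (a x) = 0)
    (f : (Fin m → ℝ) → ℝ) (hf : Differentiable ℝ f) :
    ∀ x ∈ s,
      fderiv ℝ (fun y => χ₀ y + η y * f (fun i => φ i y)) x (a x)
          + q x * (χ₀ x + η x * f (fun i => φ i x)) = b x := by
  intro x hx
  have hgd : DifferentiableAt ℝ (fun y => f (fun i => φ i y)) x :=
    (hf _).comp x (differentiableAt_pi.2 fun i => hφd i x hx)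
  have hga : fderiv ℝ (fun y => f (fun i => φ i y)) x (a x) = 0 :=
    fderiv_comp_pi_apply_eq_zero (hf _) (fun i => hφd i x hx) (fun i => hφeq i x hx)
  rw [fderiv_add_mul_apply_of_fderiv_apply_eq_zero (hχ₀d x hx) (hηd x hx) hgd hga]
  linear_combination hχ₀eq x hx + f (fun i => φ i x) * hηeq x hx

/-- The general solution of the totally linear equation: χ = χ₀ + η·f(φ₁,…,φₘ)
solves (L+q)χ = b on s. -/
theorem general_solution_totally_linear
    {X : Type*} [NormedAddCommGroup X] [NormedSpace ℝ X]
    (s : Set X) (hs : IsOpen s) (a : X → X) (q b : X → ℝ) (χ₀ η : X → ℝ)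
    (hχ₀d : ∀ x ∈ s, DifferentiableAt ℝ χ₀ x)
    (hχ₀eq : ∀ x ∈ s, fderiv ℝ χ₀ x (a x) + q x * χ₀ x = b x)
    (hηd : ∀ x ∈ s, DifferentiableAt ℝ η x)
    (hηeq : ∀ x ∈ s, fderiv ℝ η x (a x) + q x * η x = 0)
    (m : ℕ) (φ : Fin m → X → ℝ)
    (hφd : ∀ i, ∀ x ∈ s, DifferentiableAt ℝ (φ i) x)
    (hφeq : ∀ i, ∀ x ∈ s, fderiv ℝ (φ i) x (a x) = 0)
    (f : (Fin m → ℝ) → ℝ) (hf : Differentiable ℝ f) :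
    ∀ x ∈ s,
      fderiv ℝ (fun y => χ₀ y + η y * f (fun i => φ i y)) x (a x)
          + q x * (χ₀ x + η x * f (fun i => φ i x)) = b x :=
  general_solution_totally_linear_general s a q b χ₀ η hχ₀d hχ₀eq hηd hηeq m φ hφd hφeq f hf
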